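/- arXiv:2103.10467 — 11 statements merged into one kernel-verified Lean document; each statement's English description precedes it below -/
import Mathlib

section
/- Let F : ℝⁿ × X → Y be continuous. Then F is (R,𝓑)-multi-almost automorphic if and only if for every B ∈ 𝓑 and every sequence (b_k) in R there exists a subsequence (b_{k_l}) of (b_k) such that the iterated limit lim_{l→∞} lim_{m→∞} F(t − b_{k_l} + b_{k_m}; x) exists and equals F(t; x), pointwise for every x ∈ B and every t ∈ ℝⁿ. -/
open Filter Topology MeasureTheory

noncomputable section

/-- `F : ℝⁿ × X → Y` is `(R, 𝓑)`-multi-almost automorphic. -/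
def MultiAA {n : ℕ} {X Y : Type*} [NormedAddCommGroup X] [NormedAddCommGroup Y]
    (R : Set (ℕ → EuclideanSpace ℝ (Fin n))) (𝓑 : Set (Set X))
    (F : EuclideanSpace ℝ (Fin n) → X → Y) : Prop :=
  Continuous (fun p : EuclideanSpace ℝ (Fin n) × X => F p.1 p.2) ∧
  ∀ B ∈ 𝓑, ∀ b ∈ R, ∃ k : ℕ → ℕ, StrictMono k ∧
    ∃ Fs : EuclideanSpace ℝ (Fin n) → X → Y,
      (∀ x ∈ B, ∀ t, Tendsto (fun l => F (t + b (k l)) x) atTop (𝓝 (Fs t x))) ∧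
      (∀ x ∈ B, ∀ t, Tendsto (fun l => Fs (t - b (k l)) x) atTop (𝓝 (F t x)))

/-- `F : ℝⁿ × X → Y` is compactly `(R, 𝓑)`-multi-almost automorphic: the two limits
converge uniformly in `t` on compact subsets of `ℝⁿ`, for each `x ∈ B`. -/
def CompactMultiAA {n : ℕ} {X Y : Type*} [NormedAddCommGroup X] [NormedAddCommGroup Y]
    (R : Set (ℕ → EuclideanSpace ℝ (Fin n))) (𝓑 : Set (Set X))
    (F : EuclideanSpace ℝ (Fin n) → X → Y) : Prop :=
  Continuous (fun p : EuclideanSpace ℝ (Fin n) × X => F p.1 p.2) ∧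
  ∀ B ∈ 𝓑, ∀ b ∈ R, ∃ k : ℕ → ℕ, StrictMono k ∧
    ∃ Fs : EuclideanSpace ℝ (Fin n) → X → Y,
      (∀ x ∈ B, ∀ K : Set (EuclideanSpace ℝ (Fin n)), IsCompact K →
        TendstoUniformlyOn (fun l t => F (t + b (k l)) x) (fun t => Fs t x) atTop K) ∧
      (∀ x ∈ B, ∀ K : Set (EuclideanSpace ℝ (Fin n)), IsCompact K →
        TendstoUniformlyOn (fun l t => Fs (t - b (k l)) x) (fun t => F t x) atTop K)

/-- a continuous `F` is `(R,𝓑)`-multi-almost automorphic iff for every `B ∈ 𝓑`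
and every sequence in `R` there is a subsequence along which the iterated limit
`lim_l lim_m F(t - b_{k_l} + b_{k_m}; x)` exists and equals `F(t; x)` pointwise on `B × ℝⁿ`. -/
theorem multiAA_iff_iterated_limit {n : ℕ} {X Y : Type*}
    [NormedAddCommGroup X] [NormedSpace ℝ X] [CompleteSpace X]
    [NormedAddCommGroup Y] [NormedSpace ℝ Y] [CompleteSpace Y]
    (R : Set (ℕ → EuclideanSpace ℝ (Fin n))) (𝓑 : Set (Set X))
    (hR : R.Nonempty) (h𝓑 : 𝓑.Nonempty)
    (F : EuclideanSpace ℝ (Fin n) → X → Y)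
    (hF : Continuous fun p : EuclideanSpace ℝ (Fin n) × X => F p.1 p.2) :
    MultiAA R 𝓑 F ↔
      ∀ B ∈ 𝓑, ∀ b ∈ R, ∃ k : ℕ → ℕ, StrictMono k ∧
        ∃ G : ℕ → EuclideanSpace ℝ (Fin n) → X → Y,
          (∀ l, ∀ x ∈ B, ∀ t,
            Tendsto (fun m => F (t - b (k l) + b (k m)) x) atTop (𝓝 (G l t x))) ∧
          (∀ x ∈ B, ∀ t, Tendsto (fun l => G l t x) atTop (𝓝 (F t x))) := by
  constructor
  · rintro ⟨-, h⟩ B hB b hb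
    obtain ⟨k, hk, Fs, h1, h2⟩ := h B hB b hb
    exact ⟨k, hk, fun l t x => Fs (t - b (k l)) x,
      fun l x hx t => h1 x hx (t - b (k l)), h2⟩
  · intro h
    refine ⟨hF, fun B hB b hb => ?_⟩
    obtain ⟨k, hk, G, h1, h2⟩ := h B hB b hb
    refine ⟨k, hk, fun t x => G 0 (t + b (k 0)) x, ?_, ?_⟩
    · intro x hx t
      have hA := h1 0 x hx (t + b (k 0))
      have he : (fun m => F (t + b (k 0) - b (k 0) + b (k m)) x)
          = fun m => F (t + b (k m)) x := by
        funext m; congr 1; abel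
      rwa [he] at hA
    · intro x hx t
      have key : ∀ l, G 0 (t - b (k l) + b (k 0)) x = G l t x := by
        intro l
        have hA := h1 0 x hx (t - b (k l) + b (k 0))
        have he : (fun m => F (t - b (k l) + b (k 0) - b (k 0) + b (k m)) x)
            = fun m => F (t - b (k l) + b (k m)) x := by
          funext m; congr 1; abel
        rw [he] at hA
        exact tendsto_nhds_unique hA (h1 l x hx t)
      simp only [key]
      exact h2 x hx t
end
end

section
/- Suppose F : ℝⁿ × X → Y is (R,𝓑)-multi-almost automorphic and φ : Y → Z is continuous. Then the function (t; x) ↦ φ(F(t; x)) from ℝⁿ × X to Z is (R,𝓑)-multi-almost automorphic. -/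
open Filter Topology MeasureTheory

noncomputable section

/-- the post-composition of an `(R,𝓑)`-multi-almost automorphic function with a
continuous map is `(R,𝓑)`-multi-almost automorphic. -/
theorem multiAA_comp_continuous {n : ℕ} {X Y Z : Type*}
    [NormedAddCommGroup X] [NormedSpace ℝ X] [CompleteSpace X]
    [NormedAddCommGroup Y] [NormedSpace ℝ Y] [CompleteSpace Y]
    [NormedAddCommGroup Z] [NormedSpace ℝ Z] [CompleteSpace Z]
    (R : Set (ℕ → EuclideanSpace ℝ (Fin n))) (𝓑 : Set (Set X))
    (hR : R.Nonempty) (h𝓑 : 𝓑.Nonempty)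
    (F : EuclideanSpace ℝ (Fin n) → X → Y) (φ : Y → Z)
    (hF : MultiAA R 𝓑 F) (hφ : Continuous φ) :
    MultiAA R 𝓑 (fun t x => φ (F t x)) := by
  obtain ⟨hc, h⟩ := hF
  refine ⟨hφ.comp hc, fun B hB b hb => ?_⟩
  obtain ⟨k, hk, Fs, h1, h2⟩ := h B hB b hb
  exact ⟨k, hk, fun t x => φ (Fs t x),
    fun x hx t => (hφ.tendsto _).comp (h1 x hx t),
    fun x hx t => (hφ.tendsto _).comp (h2 x hx t)⟩
end
end

section
/- Suppose every element of X belongs to some member of 𝓑, F : ℝⁿ × X → Y is (R,𝓑)-multi-almost automorphic, and R contains a sequence every subsequence of which is unbounded. Then for every a ≥ 0 one has the supremum formula sup_{t ∈ ℝⁿ, x ∈ X} ‖F(t; x)‖_Y = sup_{t ∈ ℝⁿ, |t| ≥ a, x ∈ X} ‖F(t; x)‖_Y (equality in [0, ∞]). -/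
open Filter Topology MeasureTheory

noncomputable section

open scoped ENNReal NNReal

/-!
Take `x`, a member `B ∋ x` of `𝓑` and the sequence `b ∈ R` with no bounded subsequence; the
subsequence `v = b ∘ k` given by multi-almost automorphy then has `‖v l‖ → ∞`. For every `s`,
`F* (s; x)` is the limit of `F (s + v l; x)`, whose arguments eventually have norm `≥ a`, so
`‖F* (s; x)‖` is bounded by the right-hand supremum; and `F (t; x)` is the limit of
`F* (t - v l; x)`, so the same bound holds for `‖F (t; x)‖`.
-/

section

variable {E Y : Type*} [SeminormedAddCommGroup E] [SeminormedAddCommGroup Y]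

theorem tendsto_norm_atTop_of_forall_subseq_not_isBounded {u : ℕ → E}
    (hu : ∀ φ : ℕ → ℕ, StrictMono φ → ¬ Bornology.IsBounded (Set.range (u ∘ φ))) :
    Tendsto (fun l => ‖u l‖) atTop atTop := by
  refine tendsto_atTop.2 fun C => ?_
  by_contra hC
  obtain ⟨φ, hφ, hφC⟩ := extraction_of_frequently_atTop (not_eventually.1 hC)
  refine hu φ hφ (isBounded_iff_forall_norm_le.2 ⟨C, ?_⟩)
  rintro _ ⟨j, rfl⟩
  exact (not_le.1 (hφC j)).le

theorem eventually_le_norm_add_of_tendsto_norm_atTop {v : ℕ → E}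
    (hv : Tendsto (fun l => ‖v l‖) atTop atTop) (s : E) (a : ℝ) :
    ∀ᶠ l in atTop, a ≤ ‖s + v l‖ := by
  filter_upwards [hv.eventually_ge_atTop (a + ‖s‖)] with l hl
  have := norm_sub_le (s + v l) s
  rw [add_sub_cancel_left] at this
  linarith

theorem nnnorm_le_iSup_norm_ge_of_tendsto_translate {f : E → Y} {v : ℕ → E}
    (hv : Tendsto (fun l => ‖v l‖) atTop atTop) {s : E} {y : Y}
    (hy : Tendsto (fun l => f (s + v l)) atTop (𝓝 y)) (a : ℝ) :
    (‖y‖₊ : ℝ≥0∞) ≤ ⨆ (t : E) (_ : a ≤ ‖t‖), (‖f t‖₊ : ℝ≥0∞) := by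
  refine le_of_tendsto (ENNReal.tendsto_coe.2 hy.nnnorm) ?_
  filter_upwards [eventually_le_norm_add_of_tendsto_norm_atTop hv s a] with l hl
  exact le_iSup₂_of_le (s + v l) hl le_rfl

theorem nnnorm_le_iSup_norm_ge_of_translate_pair {f g : E → Y} {v : ℕ → E}
    (hv : Tendsto (fun l => ‖v l‖) atTop atTop)
    (hfg : ∀ s, Tendsto (fun l => f (s + v l)) atTop (𝓝 (g s)))
    (hgf : ∀ t, Tendsto (fun l => g (t - v l)) atTop (𝓝 (f t))) (a : ℝ) (t : E) :
    (‖f t‖₊ : ℝ≥0∞) ≤ ⨆ (s : E) (_ : a ≤ ‖s‖), (‖f s‖₊ : ℝ≥0∞) :=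
  le_of_tendsto' (ENNReal.tendsto_coe.2 (hgf t).nnnorm) fun _ =>
    nnnorm_le_iSup_norm_ge_of_tendsto_translate hv (hfg _) a

end

theorem multiAA_sup_formula_general {n : ℕ} {X Y : Type*}
    [NormedAddCommGroup X]
    [NormedAddCommGroup Y]
    (R : Set (ℕ → EuclideanSpace ℝ (Fin n))) (𝓑 : Set (Set X))
    (hcov : ∀ x : X, ∃ B ∈ 𝓑, x ∈ B)
    (F : EuclideanSpace ℝ (Fin n) → X → Y)
    (hF : MultiAA R 𝓑 F)
    (hb : ∃ b ∈ R, ∀ k : ℕ → ℕ, StrictMono k →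
      ¬ Bornology.IsBounded (Set.range fun j => b (k j)))
    (a : ℝ) :
    (⨆ (t : EuclideanSpace ℝ (Fin n)) (x : X), (‖F t x‖₊ : ℝ≥0∞)) =
      ⨆ (t : EuclideanSpace ℝ (Fin n)) (_ : a ≤ ‖t‖) (x : X), (‖F t x‖₊ : ℝ≥0∞) := by
  refine le_antisymm (iSup₂_le fun t x => ?_) (iSup₂_le fun t _ => le_iSup_of_le t le_rfl)
  obtain ⟨B, hB, hx⟩ := hcov x
  obtain ⟨b, hbR, hbu⟩ := hb
  obtain ⟨k, hk, Fs, hFFs, hFsF⟩ := hF.2 B hB b hbR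
  have hv : Tendsto (fun l => ‖b (k l)‖) atTop atTop :=
    tendsto_norm_atTop_of_forall_subseq_not_isBounded fun φ hφ => hbu (k ∘ φ) (hk.comp hφ)
  calc (‖F t x‖₊ : ℝ≥0∞)
      ≤ ⨆ (s : EuclideanSpace ℝ (Fin n)) (_ : a ≤ ‖s‖), (‖F s x‖₊ : ℝ≥0∞) :=
        nnnorm_le_iSup_norm_ge_of_translate_pair (g := fun s => Fs s x) hv
          (fun s => hFFs x hx s) (fun s => hFsF x hx s) a t
    _ ≤ _ := iSup₂_mono fun s _ => le_iSup (fun x' => (‖F s x'‖₊ : ℝ≥0∞)) x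

/-- the supremum formula for `(R,𝓑)`-multi-almost automorphic functions. -/
theorem multiAA_sup_formula {n : ℕ} {X Y : Type*}
    [NormedAddCommGroup X] [NormedSpace ℝ X] [CompleteSpace X]
    [NormedAddCommGroup Y] [NormedSpace ℝ Y] [CompleteSpace Y]
    (R : Set (ℕ → EuclideanSpace ℝ (Fin n))) (𝓑 : Set (Set X))
    (hR : R.Nonempty) (h𝓑 : 𝓑.Nonempty)
    (hcov : ∀ x : X, ∃ B ∈ 𝓑, x ∈ B)
    (F : EuclideanSpace ℝ (Fin n) → X → Y)
    (hF : MultiAA R 𝓑 F)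
    (hb : ∃ b ∈ R, ∀ k : ℕ → ℕ, StrictMono k →
      ¬ Bornology.IsBounded (Set.range fun j => b (k j)))
    (a : ℝ) (ha : 0 ≤ a) :
    (⨆ (t : EuclideanSpace ℝ (Fin n)) (x : X), (‖F t x‖₊ : ℝ≥0∞)) =
      ⨆ (t : EuclideanSpace ℝ (Fin n)) (_ : a ≤ ‖t‖) (x : X), (‖F t x‖₊ : ℝ≥0∞) :=
  multiAA_sup_formula_general R 𝓑 hcov F hF hb a
end
end

section
/- Let c be a nonzero real number and set R_c := {(c⁻¹ b_k)_k : (b_k) ∈ R}. If F : ℝⁿ × X → Y is (compactly) (R,𝓑)-multi-almost automorphic, then the function (t; x) ↦ F(c·t; x) is (compactly) (R_c,𝓑)-multi-almost automorphic. -/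
/-!
Rescaling time by `c` conjugates the translations: `c • (t + c⁻¹ • b) = c • t + b`. So for
the sequence `c⁻¹ • b` one keeps the subsequence chosen for `b` and takes `F*(c • t; x)` as the
limit function; uniform convergence on a compact `K` follows from that on the compact `c • K`.
-/

open Filter Topology MeasureTheory

noncomputable section

theorem tendstoUniformlyOn_comp_of_forall_isCompact {ι α β γ : Type*} [TopologicalSpace α]
    [TopologicalSpace γ] [UniformSpace β] {p : Filter ι} {G : ι → α → β} {g : α → β}
    (h : ∀ K, IsCompact K → TendstoUniformlyOn G g p K) {φ : γ → α} (hφ : Continuous φ)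
    {K : Set γ} (hK : IsCompact K) : TendstoUniformlyOn (fun i => G i ∘ φ) (g ∘ φ) p K :=
  ((h _ (hK.image hφ)).comp φ).mono (Set.subset_preimage_image φ K)

section Rescale

variable {n : ℕ} {X Y : Type*} [NormedAddCommGroup X] [NormedAddCommGroup Y]
  {R : Set (ℕ → EuclideanSpace ℝ (Fin n))} {𝓑 : Set (Set X)}
  {F : EuclideanSpace ℝ (Fin n) → X → Y} {c : ℝ}

theorem MultiAA.comp_smul (hc : c ≠ 0) (hF : MultiAA R 𝓑 F) :
    MultiAA {b' | ∃ b ∈ R, b' = fun k => c⁻¹ • b k} 𝓑 (fun t x => F (c • t) x) := by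
  obtain ⟨hcont, hF⟩ := hF
  refine ⟨hcont.comp ((continuous_fst.const_smul c).prodMk continuous_snd), ?_⟩
  rintro B hB _ ⟨b, hb, rfl⟩
  obtain ⟨k, hk, Fs, hfwd, hback⟩ := hF B hB b hb
  refine ⟨k, hk, fun t x => Fs (c • t) x, fun x hx t => ?_, fun x hx t => ?_⟩
  · simpa only [smul_add, smul_inv_smul₀ hc] using hfwd x hx (c • t)
  · simpa only [smul_sub, smul_inv_smul₀ hc] using hback x hx (c • t)

theorem CompactMultiAA.comp_smul (hc : c ≠ 0) (hF : CompactMultiAA R 𝓑 F) :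
    CompactMultiAA {b' | ∃ b ∈ R, b' = fun k => c⁻¹ • b k} 𝓑 (fun t x => F (c • t) x) := by
  obtain ⟨hcont, hF⟩ := hF
  refine ⟨hcont.comp ((continuous_fst.const_smul c).prodMk continuous_snd), ?_⟩
  rintro B hB _ ⟨b, hb, rfl⟩
  obtain ⟨k, hk, Fs, hfwd, hback⟩ := hF B hB b hb
  refine ⟨k, hk, fun t x => Fs (c • t) x, fun x hx K hK => ?_, fun x hx K hK => ?_⟩
  · simpa only [Function.comp_def, smul_add, smul_inv_smul₀ hc] using
      tendstoUniformlyOn_comp_of_forall_isCompact (hfwd x hx) (continuous_const_smul c) hK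
  · simpa only [Function.comp_def, smul_sub, smul_inv_smul₀ hc] using
      tendstoUniformlyOn_comp_of_forall_isCompact (hback x hx) (continuous_const_smul c) hK

end Rescale

theorem multiAA_scale_general {n : ℕ} {X Y : Type*}
    [NormedAddCommGroup X]
    [NormedAddCommGroup Y]
    (R : Set (ℕ → EuclideanSpace ℝ (Fin n))) (𝓑 : Set (Set X))
    (F : EuclideanSpace ℝ (Fin n) → X → Y) (c : ℝ) (hc : c ≠ 0) :
    (MultiAA R 𝓑 F →
      MultiAA {b' | ∃ b ∈ R, b' = fun k => c⁻¹ • b k} 𝓑 (fun t x => F (c • t) x)) ∧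
    (CompactMultiAA R 𝓑 F →
      CompactMultiAA {b' | ∃ b ∈ R, b' = fun k => c⁻¹ • b k} 𝓑 (fun t x => F (c • t) x)) :=
  ⟨fun hF => hF.comp_smul hc, fun hF => hF.comp_smul hc⟩

/-- if `F` is (compactly) `(R,𝓑)`-multi-almost automorphic and `c ≠ 0`, then
`(t; x) ↦ F(c·t; x)` is (compactly) `(R_c,𝓑)`-multi-almost automorphic, where
`R_c = {(c⁻¹ b_k)_k : (b_k) ∈ R}`. -/
theorem multiAA_scale {n : ℕ} {X Y : Type*}
    [NormedAddCommGroup X] [NormedSpace ℝ X] [CompleteSpace X]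
    [NormedAddCommGroup Y] [NormedSpace ℝ Y] [CompleteSpace Y]
    (R : Set (ℕ → EuclideanSpace ℝ (Fin n))) (𝓑 : Set (Set X))
    (hR : R.Nonempty) (h𝓑 : 𝓑.Nonempty)
    (F : EuclideanSpace ℝ (Fin n) → X → Y) (c : ℝ) (hc : c ≠ 0) :
    (MultiAA R 𝓑 F →
      MultiAA {b' | ∃ b ∈ R, b' = fun k => c⁻¹ • b k} 𝓑 (fun t x => F (c • t) x)) ∧
    (CompactMultiAA R 𝓑 F →
      CompactMultiAA {b' | ∃ b ∈ R, b' = fun k => c⁻¹ • b k} 𝓑 (fun t x => F (c • t) x)) :=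
  multiAA_scale_general R 𝓑 F c hc
end
end

section
/- Suppose α and β are scalars and every subsequence of every sequence in R again belongs to R. If F : ℝⁿ × X → Y and G : ℝⁿ × X → Y are (compactly) (R,𝓑)-multi-almost automorphic, then αF + βG is (compactly) (R,𝓑)-multi-almost automorphic. -/
open Filter Topology MeasureTheory

noncomputable section

private lemma tuon_subseq {α β : Type*} [UniformSpace β] {F : ℕ → α → β} {f : α → β}
    {K : Set α} (h : TendstoUniformlyOn F f atTop K) {k : ℕ → ℕ}
    (hk : Tendsto k atTop atTop) : TendstoUniformlyOn (fun l => F (k l)) f atTop K :=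
  fun u hu => hk.eventually (h u hu)

private lemma tuon_const_smul {α Y : Type*} [NormedAddCommGroup Y] [NormedSpace ℝ Y]
    {F : ℕ → α → Y} {f : α → Y} {K : Set α} (c : ℝ)
    (h : TendstoUniformlyOn F f atTop K) :
    TendstoUniformlyOn (fun l t => c • F l t) (fun t => c • f t) atTop K :=
  (lipschitzWith_smul (β := Y) c).uniformContinuous.comp_tendstoUniformlyOn h

/-- if `R` is closed under taking subsequences, then linear combinations of
(compactly) `(R,𝓑)`-multi-almost automorphic functions are (compactly)
`(R,𝓑)`-multi-almost automorphic. -/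
theorem multiAA_linear_combination {n : ℕ} {X Y : Type*}
    [NormedAddCommGroup X] [NormedSpace ℝ X] [CompleteSpace X]
    [NormedAddCommGroup Y] [NormedSpace ℝ Y] [CompleteSpace Y]
    (R : Set (ℕ → EuclideanSpace ℝ (Fin n))) (𝓑 : Set (Set X))
    (hR : R.Nonempty) (h𝓑 : 𝓑.Nonempty)
    (hRsub : ∀ b ∈ R, ∀ k : ℕ → ℕ, StrictMono k → (fun j => b (k j)) ∈ R)
    (α β : ℝ) (F G : EuclideanSpace ℝ (Fin n) → X → Y) :
    (MultiAA R 𝓑 F → MultiAA R 𝓑 G →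
      MultiAA R 𝓑 (fun t x => α • F t x + β • G t x)) ∧
    (CompactMultiAA R 𝓑 F → CompactMultiAA R 𝓑 G →
      CompactMultiAA R 𝓑 (fun t x => α • F t x + β • G t x)) := by
  constructor
  · rintro ⟨hFc, hF⟩ ⟨hGc, hG⟩
    refine ⟨(hFc.const_smul α).add (hGc.const_smul β), ?_⟩
    intro B hB b hb
    obtain ⟨k₁, hk₁, Fs, hFs₁, hFs₂⟩ := hF B hB b hb
    obtain ⟨k₂, hk₂, Gs, hGs₁, hGs₂⟩ := hG B hB _ (hRsub b hb k₁ hk₁)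
    refine ⟨k₁ ∘ k₂, hk₁.comp hk₂, fun t x => α • Fs t x + β • Gs t x, ?_, ?_⟩
    · intro x hx t
      exact (((hFs₁ x hx t).comp hk₂.tendsto_atTop).const_smul α).add
        ((hGs₁ x hx t).const_smul β)
    · intro x hx t
      exact (((hFs₂ x hx t).comp hk₂.tendsto_atTop).const_smul α).add
        ((hGs₂ x hx t).const_smul β)
  · rintro ⟨hFc, hF⟩ ⟨hGc, hG⟩
    refine ⟨(hFc.const_smul α).add (hGc.const_smul β), ?_⟩
    intro B hB b hb
    obtain ⟨k₁, hk₁, Fs, hFs₁, hFs₂⟩ := hF B hB b hb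
    obtain ⟨k₂, hk₂, Gs, hGs₁, hGs₂⟩ := hG B hB _ (hRsub b hb k₁ hk₁)
    refine ⟨k₁ ∘ k₂, hk₁.comp hk₂, fun t x => α • Fs t x + β • Gs t x, ?_, ?_⟩
    · intro x hx K hK
      exact (tuon_const_smul α (tuon_subseq (hFs₁ x hx K hK) hk₂.tendsto_atTop)).add
        (tuon_const_smul β (hGs₁ x hx K hK))
    · intro x hx K hK
      exact (tuon_const_smul α (tuon_subseq (hFs₂ x hx K hK) hk₂.tendsto_atTop)).add
        (tuon_const_smul β (hGs₂ x hx K hK))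
end
end

section
/- Assume conditions (D1) and (D2) hold and every element of X belongs to some member of 𝓑. Suppose F(t; x) = G₁(t; x) + Q₁(t; x) = G₂(t; x) + Q₂(t; x) for all t ∈ ℝⁿ and x ∈ X, where G₁ and G₂ are (R,𝓑)-multi-almost automorphic and Q₁, Q₂ ∈ C_{0,ℝⁿ,𝓑}(ℝⁿ × X : Y). Then G₁ = G₂ and Q₁ = Q₂. -/
open Filter Topology MeasureTheory

noncomputable section

/-- `Q ∈ C_{0,ℝⁿ,𝓑}(ℝⁿ × X : Y)`: continuous and, for every `B ∈ 𝓑`, `Q(t;x) → 0` as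
`|t| → ∞`, uniformly for `x ∈ B`. -/
def C0B {n : ℕ} {X Y : Type*} [NormedAddCommGroup X] [NormedAddCommGroup Y]
    (𝓑 : Set (Set X)) (Q : EuclideanSpace ℝ (Fin n) → X → Y) : Prop :=
  Continuous (fun p : EuclideanSpace ℝ (Fin n) × X => Q p.1 p.2) ∧
  ∀ B ∈ 𝓑, ∀ ε > 0, ∃ r : ℝ, ∀ t : EuclideanSpace ℝ (Fin n), r ≤ ‖t‖ → ∀ x ∈ B, ‖Q t x‖ < ε

/-- under (D1) and (D2), the decomposition of an asymptotically
`(R,𝓑)`-multi-almost automorphic function is unique. -/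
theorem asympMultiAA_decomposition_unique {n : ℕ} {X Y : Type*}
    [NormedAddCommGroup X] [NormedSpace ℝ X] [CompleteSpace X]
    [NormedAddCommGroup Y] [NormedSpace ℝ Y] [CompleteSpace Y]
    (R : Set (ℕ → EuclideanSpace ℝ (Fin n))) (𝓑 : Set (Set X))
    (hR : R.Nonempty) (h𝓑 : 𝓑.Nonempty)
    (hD1 : ∃ b ∈ R, ∀ k : ℕ → ℕ, StrictMono k →
      ¬ Bornology.IsBounded (Set.range fun j => b (k j)))
    (hD2 : ∀ b ∈ R, ∀ k : ℕ → ℕ, StrictMono k → (fun j => b (k j)) ∈ R)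
    (hcov : ∀ x : X, ∃ B ∈ 𝓑, x ∈ B)
    (G₁ G₂ Q₁ Q₂ : EuclideanSpace ℝ (Fin n) → X → Y)
    (hG₁ : MultiAA R 𝓑 G₁) (hG₂ : MultiAA R 𝓑 G₂)
    (hQ₁ : C0B 𝓑 Q₁) (hQ₂ : C0B 𝓑 Q₂)
    (hdec : ∀ t x, G₁ t x + Q₁ t x = G₂ t x + Q₂ t x) :
    G₁ = G₂ ∧ Q₁ = Q₂ := by
  obtain ⟨b, hbR, hbU⟩ := hD1
  have hQdiff : ∀ s x, G₁ s x - G₂ s x = Q₂ s x - Q₁ s x := by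
    intro s x
    exact sub_eq_sub_iff_add_eq_add.2 (by rw [hdec s x, add_comm])
  have key : ∀ x t, G₁ t x = G₂ t x := by
    intro x t0
    obtain ⟨B, hB, hxB⟩ := hcov x
    obtain ⟨k₁, hk₁, G₁s, h1f, h1b⟩ := hG₁.2 B hB b hbR
    have hbk₁ : (fun j => b (k₁ j)) ∈ R := hD2 b hbR k₁ hk₁
    obtain ⟨k₂, hk₂, G₂s, h2f, h2b⟩ := hG₂.2 B hB _ hbk₁
    set d : ℕ → EuclideanSpace ℝ (Fin n) := fun l => b (k₁ (k₂ l)) with hd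
    have hk₂T : Tendsto k₂ atTop atTop := hk₂.tendsto_atTop
    have L1 : ∀ t, Tendsto (fun l => G₁ (t + d l) x) atTop (𝓝 (G₁s t x)) :=
      fun t => (h1f x hxB t).comp hk₂T
    have L1b : ∀ t, Tendsto (fun l => G₁s (t - d l) x) atTop (𝓝 (G₁ t x)) :=
      fun t => (h1b x hxB t).comp hk₂T
    have L2 : ∀ t, Tendsto (fun l => G₂ (t + d l) x) atTop (𝓝 (G₂s t x)) :=
      fun t => h2f x hxB t
    have L2b : ∀ t, Tendsto (fun l => G₂s (t - d l) x) atTop (𝓝 (G₂ t x)) :=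
      fun t => h2b x hxB t
    -- frequently, ‖d l‖ is large
    have hfreq : ∀ C : ℝ, ∃ᶠ l in atTop, C ≤ ‖d l‖ := by
      intro C
      by_contra h
      rw [Filter.not_frequently] at h
      simp only [not_le] at h
      obtain ⟨N, hN⟩ := Filter.eventually_atTop.1 h
      have hsm : StrictMono fun j => k₁ (k₂ (j + N)) :=
        (hk₁.comp hk₂).comp (fun a b hab => Nat.add_lt_add_right hab N)
      refine hbU _ hsm ?_
      rw [isBounded_iff_forall_norm_le]
      exact ⟨C, by rintro y ⟨j, rfl⟩; exact (hN (j + N) (Nat.le_add_left N j)).le⟩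
    -- the limit function difference vanishes
    have hstar : ∀ t, G₁s t x = G₂s t x := by
      intro t
      have hlim : Tendsto (fun l => G₁ (t + d l) x - G₂ (t + d l) x) atTop
          (𝓝 (G₁s t x - G₂s t x)) := (L1 t).sub (L2 t)
      have hsmall : ∀ ε > (0 : ℝ), ‖G₁s t x - G₂s t x‖ ≤ ε := by
        intro ε hε
        obtain ⟨r₁, hr₁⟩ := hQ₁.2 B hB (ε / 2) (by positivity)
        obtain ⟨r₂, hr₂⟩ := hQ₂.2 B hB (ε / 2) (by positivity)
        by_contra hgt
        push_neg at hgt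
        have hev : ∀ᶠ l in atTop, ε < ‖G₁ (t + d l) x - G₂ (t + d l) x‖ :=
          hlim.norm.eventually (eventually_gt_nhds hgt)
        obtain ⟨l, hl1, hl2⟩ := ((hfreq (max r₁ r₂ + ‖t‖)).and_eventually hev).exists
        have hnorm : ‖d l‖ ≤ ‖t + d l‖ + ‖t‖ := by
          simpa using norm_add_le (t + d l) (-t)
        have hs : max r₁ r₂ ≤ ‖t + d l‖ := by linarith
        have h1 := hr₁ _ (le_trans (le_max_left _ _) hs) x hxB
        have h2 := hr₂ _ (le_trans (le_max_right _ _) hs) x hxB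
        have hlt : ‖G₁ (t + d l) x - G₂ (t + d l) x‖ < ε := by
          rw [hQdiff]
          calc ‖Q₂ (t + d l) x - Q₁ (t + d l) x‖
              ≤ ‖Q₂ (t + d l) x‖ + ‖Q₁ (t + d l) x‖ := norm_sub_le _ _
            _ < ε / 2 + ε / 2 := add_lt_add h2 h1
            _ = ε := by ring
        linarith
      have hle : ‖G₁s t x - G₂s t x‖ ≤ 0 := by
        by_contra hpos
        push_neg at hpos
        have := hsmall (‖G₁s t x - G₂s t x‖ / 2) (by linarith)
        linarith
      have := le_antisymm hle (norm_nonneg _)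
      exact sub_eq_zero.1 (norm_eq_zero.1 this)
    have hlim0 : Tendsto (fun l => G₁s (t0 - d l) x - G₂s (t0 - d l) x) atTop
        (𝓝 (G₁ t0 x - G₂ t0 x)) := (L1b t0).sub (L2b t0)
    have hlim0' : Tendsto (fun _ : ℕ => (0 : Y)) atTop (𝓝 (G₁ t0 x - G₂ t0 x)) := by
      refine hlim0.congr fun l => ?_
      rw [hstar (t0 - d l), sub_self]
    have := tendsto_nhds_unique hlim0' tendsto_const_nhds
    exact sub_eq_zero.1 this
  constructor
  · funext t x; exact key x t
  · funext t x
    have h := hdec t x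
    rw [key x t] at h
    exact add_left_cancel h
end
end

section
/- Assume condition (D1) holds and every element of X belongs to some member of 𝓑. Suppose F(t; x) = G(t; x) + Q(t; x) for all t ∈ ℝⁿ and x ∈ X, where G is (R,𝓑)-multi-almost automorphic and Q ∈ C_{0,ℝⁿ,𝓑}(ℝⁿ × X : Y). Then the closure of {G(t; x) : t ∈ ℝⁿ, x ∈ X} in Y is contained in the closure of {F(t; x) : t ∈ ℝⁿ, x ∈ X} in Y. -/
open Filter Topology MeasureTheory

noncomputable section

/-- under (D1), the closure of the range of the almost automorphic part `G`
is contained in the closure of the range of `F = G + Q`. -/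
theorem asympMultiAA_range_closure {n : ℕ} {X Y : Type*}
    [NormedAddCommGroup X] [NormedSpace ℝ X] [CompleteSpace X]
    [NormedAddCommGroup Y] [NormedSpace ℝ Y] [CompleteSpace Y]
    (R : Set (ℕ → EuclideanSpace ℝ (Fin n))) (𝓑 : Set (Set X))
    (hR : R.Nonempty) (h𝓑 : 𝓑.Nonempty)
    (hD1 : ∃ b ∈ R, ∀ k : ℕ → ℕ, StrictMono k →
      ¬ Bornology.IsBounded (Set.range fun j => b (k j)))
    (hcov : ∀ x : X, ∃ B ∈ 𝓑, x ∈ B)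
    (F G Q : EuclideanSpace ℝ (Fin n) → X → Y)
    (hG : MultiAA R 𝓑 G) (hQ : C0B 𝓑 Q)
    (hdec : ∀ t x, F t x = G t x + Q t x) :
    closure {y : Y | ∃ t x, G t x = y} ⊆ closure {y : Y | ∃ t x, F t x = y} := by
  refine closure_minimal ?_ isClosed_closure
  rintro y ⟨t, x, rfl⟩
  obtain ⟨B, hB, hxB⟩ := hcov x
  obtain ⟨b, hbR, hbU⟩ := hD1
  obtain ⟨k, hk, Fs, h1, h2⟩ := hG.2 B hB b hbR
  rw [Metric.mem_closure_iff]
  intro ε hε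
  have hε3 : 0 < ε / 3 := by linarith
  obtain ⟨L, hL⟩ := Metric.tendsto_atTop.mp (h2 x hxB t) (ε / 3) hε3
  have hl := hL L le_rfl
  set s : EuclideanSpace ℝ (Fin n) := t - b (k L) with hs
  obtain ⟨r, hr⟩ := hQ.2 B hB (ε / 3) hε3
  obtain ⟨N, hN⟩ := Metric.tendsto_atTop.mp (h1 x hxB s) (ε / 3) hε3
  have hunb : ∃ m, N ≤ m ∧ r + ‖s‖ ≤ ‖b (k m)‖ := by
    by_contra hcon
    push_neg at hcon
    refine hbU k hk ?_
    have hsub : Set.range (fun j => b (k j)) ⊆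
        (fun j => b (k j)) '' (Set.Iio N) ∪ Metric.closedBall 0 (r + ‖s‖) := by
      rintro _ ⟨j, rfl⟩
      rcases lt_or_ge j N with h | h
      · exact Or.inl ⟨j, h, rfl⟩
      · exact Or.inr (by
          simpa [Metric.mem_closedBall, dist_zero_right] using (hcon j h).le)
    exact (Bornology.IsBounded.union (((Set.finite_Iio N).image _).isBounded)
      Metric.isBounded_closedBall).subset hsub
  obtain ⟨m, hmN, hmr⟩ := hunb
  have hGm := hN m hmN
  have hnorm : r ≤ ‖s + b (k m)‖ := by
    have h1' : ‖b (k m)‖ ≤ ‖s + b (k m)‖ + ‖s‖ := by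
      have := norm_sub_le (s + b (k m)) s
      simpa using this
    linarith
  have hQm : ‖Q (s + b (k m)) x‖ < ε / 3 := hr _ hnorm x hxB
  refine ⟨F (s + b (k m)) x, ⟨_, _, rfl⟩, ?_⟩
  have htri : dist (G t x) (F (s + b (k m)) x) ≤
      dist (G t x) (Fs s x) + dist (Fs s x) (G (s + b (k m)) x) +
      dist (G (s + b (k m)) x) (F (s + b (k m)) x) := dist_triangle4 _ _ _ _
  have hd1 : dist (G t x) (Fs s x) < ε / 3 := by
    rw [dist_comm]; exact hl
  have hd2 : dist (Fs s x) (G (s + b (k m)) x) < ε / 3 := by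
    rw [dist_comm]; exact hGm
  have hd3 : dist (G (s + b (k m)) x) (F (s + b (k m)) x) < ε / 3 := by
    rw [hdec, dist_eq_norm]
    simpa using hQm
  linarith
end
end

section
/- Suppose h ∈ L¹(ℝⁿ) (scalar-valued) and F : ℝⁿ × X → Y is bounded and (R,𝓑)-multi-almost automorphic. Then the convolution (h ∗ F)(t; x) := ∫_{ℝⁿ} h(σ) F(t − σ; x) dσ defines a bounded (R,𝓑)-multi-almost automorphic function from ℝⁿ × X to Y. -/
open Filter Topology MeasureTheory

noncomputable section

/-- convolution of an integrable scalar kernel with a bounded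
`(R,𝓑)`-multi-almost automorphic function is bounded and `(R,𝓑)`-multi-almost automorphic. -/
theorem multiAA_convolution {n : ℕ} {X Y : Type*}
    [NormedAddCommGroup X] [NormedSpace ℝ X] [CompleteSpace X]
    [NormedAddCommGroup Y] [NormedSpace ℝ Y] [CompleteSpace Y]
    (R : Set (ℕ → EuclideanSpace ℝ (Fin n))) (𝓑 : Set (Set X))
    (hR : R.Nonempty) (h𝓑 : 𝓑.Nonempty)
    (h : EuclideanSpace ℝ (Fin n) → ℝ) (hh : Integrable h)
    (F : EuclideanSpace ℝ (Fin n) → X → Y)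
    (hFbdd : ∃ C : ℝ, ∀ t x, ‖F t x‖ ≤ C)
    (hFaa : MultiAA R 𝓑 F) :
    (∃ C : ℝ, ∀ t x, ‖∫ σ, h σ • F (t - σ) x‖ ≤ C) ∧
    MultiAA R 𝓑 (fun t x => ∫ σ, h σ • F (t - σ) x) := by
  obtain ⟨C, hC⟩ := hFbdd
  have hC0 : 0 ≤ C := le_trans (norm_nonneg _) (hC 0 0)
  obtain ⟨hFcont, hFaa'⟩ := hFaa
  have hbound : Integrable (fun σ : EuclideanSpace ℝ (Fin n) => ‖h σ‖ * C) :=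
    hh.norm.mul_const C
  have hmeas : ∀ (t : EuclideanSpace ℝ (Fin n)) (x : X),
      AEStronglyMeasurable (fun σ => h σ • F (t - σ) x) volume := by
    intro t x
    exact hh.1.smul ((hFcont.comp
      ((continuous_const.sub continuous_id).prodMk continuous_const)).aestronglyMeasurable)
  have hbd : ∀ (t : EuclideanSpace ℝ (Fin n)) (x : X) (σ : EuclideanSpace ℝ (Fin n)),
      ‖h σ • F (t - σ) x‖ ≤ ‖h σ‖ * C := by
    intro t x σ
    rw [norm_smul]
    exact mul_le_mul_of_nonneg_left (hC _ _) (norm_nonneg _)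
  constructor
  · refine ⟨∫ σ, ‖h σ‖ * C, fun t x => ?_⟩
    exact norm_integral_le_of_norm_le hbound (Filter.Eventually.of_forall (hbd t x))
  constructor
  · -- continuity
    rw [continuous_iff_continuousAt]
    intro p
    apply continuousAt_of_dominated (bound := fun σ => ‖h σ‖ * C)
    · exact Filter.Eventually.of_forall fun q => hmeas q.1 q.2
    · exact Filter.Eventually.of_forall fun q =>
        Filter.Eventually.of_forall (hbd q.1 q.2)
    · exact hbound
    · refine Filter.Eventually.of_forall fun σ => ?_
      exact (continuous_const.smul (hFcont.comp
        ((continuous_fst.sub continuous_const).prodMk continuous_snd))).continuousAt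
  · intro B hB b hb
    obtain ⟨k, hk, Fs, h1, h2⟩ := hFaa' B hB b hb
    refine ⟨k, hk, fun t x => ∫ σ, h σ • Fs (t - σ) x, ?_, ?_⟩
    · intro x hx t
      apply tendsto_integral_of_dominated_convergence (fun σ => ‖h σ‖ * C)
      · exact fun l => hmeas _ x
      · exact hbound
      · exact fun l => Filter.Eventually.of_forall (hbd _ x)
      · refine Filter.Eventually.of_forall fun σ => ?_
        have : ∀ l, (t + b (k l)) - σ = (t - σ) + b (k l) := fun l => add_sub_right_comm t (b (k l)) σ
        simp only [this]
        exact (h1 x hx (t - σ)).const_smul (h σ)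
    · intro x hx t
      have hFsm : StronglyMeasurable (fun s => Fs s x) := by
        apply stronglyMeasurable_of_tendsto (f := fun l s => F (s + b (k l)) x) atTop
        · intro l
          exact (hFcont.comp ((continuous_id.add continuous_const).prodMk
            continuous_const)).stronglyMeasurable
        · exact tendsto_pi_nhds.2 fun s => h1 x hx s
      have hFsC : ∀ s, ‖Fs s x‖ ≤ C := fun s =>
        le_of_tendsto (h1 x hx s).norm (Filter.Eventually.of_forall fun l => hC _ _)
      apply tendsto_integral_of_dominated_convergence (fun σ => ‖h σ‖ * C)
      · intro l
        exact hh.1.smul ((hFsm.comp_measurable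
          (measurable_const.sub measurable_id)).aestronglyMeasurable)
      · exact hbound
      · intro l
        refine Filter.Eventually.of_forall fun σ => ?_
        rw [norm_smul]
        exact mul_le_mul_of_nonneg_left (hFsC _) (norm_nonneg _)
      · refine Filter.Eventually.of_forall fun σ => ?_
        have : ∀ l, (t - b (k l)) - σ = (t - σ) - b (k l) := fun l => sub_right_comm t (b (k l)) σ
        simp only [this]
        exact (h2 x hx (t - σ)).const_smul (h σ)
end
end

section
/- Suppose F : ℝⁿ × X → Y is (R,𝓑)-multi-almost automorphic and G : ℝⁿ × Y → Z is (R′,𝓑′)-multi-almost automorphic, where R′ is the collection consisting of all sequences in R together with all their subsequences, and 𝓑′ := { ∪_{t ∈ ℝⁿ} F(t; B) : B ∈ 𝓑 } (here F(t; B) = {F(t; x) : x ∈ B}). Suppose moreover there is a finite constant L > 0 such that ‖G(t; y₁) − G(t; y₂)‖_Z ≤ L ‖y₁ − y₂‖_Y for all t ∈ ℝⁿ and y₁, y₂ ∈ Y. Then the Nemytskii composition W(t; x) := G(t; F(t; x)) is (R,𝓑)-multi-almost automorphic as a function from ℝⁿ × X to Z. -/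
open Filter Topology MeasureTheory

noncomputable section

/-- composition (Nemytskii) theorem for `(R,𝓑)`-multi-almost automorphic
functions with a Lipschitz `(R′,𝓑′)`-multi-almost automorphic outer function. -/
theorem multiAA_nemytskii {n : ℕ} {X Y Z : Type*}
    [NormedAddCommGroup X] [NormedSpace ℝ X] [CompleteSpace X]
    [NormedAddCommGroup Y] [NormedSpace ℝ Y] [CompleteSpace Y]
    [NormedAddCommGroup Z] [NormedSpace ℝ Z] [CompleteSpace Z]
    (R : Set (ℕ → EuclideanSpace ℝ (Fin n))) (𝓑 : Set (Set X))
    (hR : R.Nonempty) (h𝓑 : 𝓑.Nonempty)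
    (F : EuclideanSpace ℝ (Fin n) → X → Y) (G : EuclideanSpace ℝ (Fin n) → Y → Z)
    (hF : MultiAA R 𝓑 F)
    (hG : MultiAA
      {b' | b' ∈ R ∨ ∃ b ∈ R, ∃ k : ℕ → ℕ, StrictMono k ∧ b' = fun j => b (k j)}
      {S : Set Y | ∃ B ∈ 𝓑, S = ⋃ t : EuclideanSpace ℝ (Fin n), F t '' B} G)
    (L : ℝ) (hL : 0 < L)
    (hLip : ∀ t : EuclideanSpace ℝ (Fin n), ∀ y₁ y₂ : Y,
      ‖G t y₁ - G t y₂‖ ≤ L * ‖y₁ - y₂‖) :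
    MultiAA R 𝓑 (fun t x => G t (F t x)) := by

  obtain ⟨hFc, hFaa⟩ := hF
  obtain ⟨hGc, hGaa⟩ := hG
  have hLd : ∀ t (y₁ y₂ : Y), dist (G t y₁) (G t y₂) ≤ L * dist y₁ y₂ := by
    intro t y₁ y₂
    rw [dist_eq_norm, dist_eq_norm]
    exact hLip t y₁ y₂
  constructor
  · exact hGc.comp (continuous_fst.prodMk hFc)
  intro B hB b hb
  obtain ⟨k, hk, Fs, hFs1, hFs2⟩ := hFaa B hB b hb
  have hSmem : (⋃ t : EuclideanSpace ℝ (Fin n), F t '' B) ∈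
      {S : Set Y | ∃ B ∈ 𝓑, S = ⋃ t : EuclideanSpace ℝ (Fin n), F t '' B} := ⟨B, hB, rfl⟩
  have hbk : (fun j => b (k j)) ∈
      {b' | b' ∈ R ∨ ∃ b ∈ R, ∃ k : ℕ → ℕ, StrictMono k ∧ b' = fun j => b (k j)} :=
    Or.inr ⟨b, hb, k, hk, rfl⟩
  obtain ⟨m, hm, Gs, hGs1, hGs2⟩ := hGaa _ hSmem _ hbk
  have hmem : ∀ x ∈ B, ∀ s, F s x ∈ ⋃ t : EuclideanSpace ℝ (Fin n), F t '' B :=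
    fun x hx s => Set.mem_iUnion.2 ⟨s, ⟨x, hx, rfl⟩⟩
  -- convergence of F along the final subsequence
  have hFs1' : ∀ x ∈ B, ∀ t,
      Tendsto (fun l => F (t + b (k (m l))) x) atTop (𝓝 (Fs t x)) :=
    fun x hx t => (hFs1 x hx t).comp hm.tendsto_atTop
  have hFs2' : ∀ x ∈ B, ∀ t,
      Tendsto (fun l => Fs (t - b (k (m l))) x) atTop (𝓝 (F t x)) :=
    fun x hx t => (hFs2 x hx t).comp hm.tendsto_atTop
  -- Cauchy sequence at the limit point Fs s x
  have hcauchy : ∀ x ∈ B, ∀ s, CauchySeq (fun j => G (s + b (k (m j))) (Fs s x)) := by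
    intro x hx s
    rw [Metric.cauchySeq_iff]
    intro ε hε
    have h4 : (0:ℝ) < ε / 4 / L := by positivity
    obtain ⟨l₀, hl₀⟩ := (Metric.tendsto_atTop.1 (hFs1 x hx s)) (ε / 4 / L) h4
    set y : Y := F (s + b (k l₀)) x with hy
    have hyS : y ∈ ⋃ t : EuclideanSpace ℝ (Fin n), F t '' B := hmem x hx _
    have hdy : dist (Fs s x) y < ε / 4 / L := by
      have := hl₀ l₀ le_rfl
      rwa [dist_comm] at this
    have hconv : Tendsto (fun l => G (s + b (k (m l))) y) atTop (𝓝 (Gs s y)) :=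
      hGs1 y hyS s
    obtain ⟨N, hN⟩ := (Metric.cauchySeq_iff.1 hconv.cauchySeq) (ε/2) (by positivity)
    refine ⟨N, fun i hi j hj => ?_⟩
    have hside : ∀ u : EuclideanSpace ℝ (Fin n),
        dist (G u (Fs s x)) (G u y) < ε / 4 := by
      intro u
      calc dist (G u (Fs s x)) (G u y) ≤ L * dist (Fs s x) y := hLd u _ _
        _ < L * (ε / 4 / L) := by
            exact mul_lt_mul_of_pos_left hdy hL
        _ = ε / 4 := by field_simp
    calc dist (G (s + b (k (m i))) (Fs s x)) (G (s + b (k (m j))) (Fs s x))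
        ≤ dist (G (s + b (k (m i))) (Fs s x)) (G (s + b (k (m i))) y)
          + dist (G (s + b (k (m i))) y) (G (s + b (k (m j))) y)
          + dist (G (s + b (k (m j))) y) (G (s + b (k (m j))) (Fs s x)) :=
            dist_triangle4 _ _ _ _
      _ < ε/4 + ε/2 + ε/4 := by
            have h1 := hside (s + b (k (m i)))
            have h2 := hN i hi j hj
            have h3 := hside (s + b (k (m j)))
            rw [dist_comm] at h3
            linarith
      _ = ε := by ring
  have hWex : ∀ x ∈ B, ∀ s, ∃ z : Z,
      Tendsto (fun j => G (s + b (k (m j))) (Fs s x)) atTop (𝓝 z) :=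
    fun x hx s => cauchySeq_tendsto_of_complete (hcauchy x hx s)
  choose! W hW using hWex
  refine ⟨k ∘ m, hk.comp hm, fun t x => W x t, ?_, ?_⟩
  · -- forward limit
    intro x hx t
    rw [tendsto_iff_dist_tendsto_zero]
    have hbound : ∀ l, dist (G (t + b ((k ∘ m) l)) (F (t + b ((k ∘ m) l)) x)) (W x t) ≤
        L * dist (F (t + b (k (m l))) x) (Fs t x)
          + dist (G (t + b (k (m l))) (Fs t x)) (W x t) := by
      intro l
      calc dist (G (t + b (k (m l))) (F (t + b (k (m l))) x)) (W x t)
          ≤ dist (G (t + b (k (m l))) (F (t + b (k (m l))) x))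
              (G (t + b (k (m l))) (Fs t x))
            + dist (G (t + b (k (m l))) (Fs t x)) (W x t) := dist_triangle _ _ _
        _ ≤ L * dist (F (t + b (k (m l))) x) (Fs t x)
            + dist (G (t + b (k (m l))) (Fs t x)) (W x t) := by
              gcongr
              exact hLd _ _ _
    have h1 : Tendsto (fun l => dist (F (t + b (k (m l))) x) (Fs t x)) atTop (𝓝 0) :=
      tendsto_iff_dist_tendsto_zero.1 (hFs1' x hx t)
    have h2 : Tendsto (fun l => dist (G (t + b (k (m l))) (Fs t x)) (W x t)) atTop (𝓝 0) :=
      tendsto_iff_dist_tendsto_zero.1 (hW x hx t)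
    have hg : Tendsto (fun l => L * dist (F (t + b (k (m l))) x) (Fs t x)
        + dist (G (t + b (k (m l))) (Fs t x)) (W x t)) atTop (𝓝 0) := by
      have := (h1.const_mul L).add h2
      simpa using this
    exact squeeze_zero (fun l => dist_nonneg) hbound hg
  · -- backward limit
    intro x hx t
    rw [tendsto_iff_dist_tendsto_zero]
    have hFtS : F t x ∈ ⋃ t : EuclideanSpace ℝ (Fin n), F t '' B := hmem x hx t
    have hbound : ∀ l, dist (W x (t - b ((k ∘ m) l))) (G t (F t x)) ≤
        L * dist (Fs (t - b (k (m l))) x) (F t x)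
          + dist (Gs (t - b (k (m l))) (F t x)) (G t (F t x)) := by
      intro l
      set s : EuclideanSpace ℝ (Fin n) := t - b (k (m l)) with hs
      have hA : Tendsto (fun j => G (s + b (k (m j))) (Fs s x)) atTop (𝓝 (W x s)) :=
        hW x hx s
      have hB2 : Tendsto (fun j => G (s + b (k (m j))) (F t x)) atTop
          (𝓝 (Gs s (F t x))) := hGs1 (F t x) hFtS s
      have hdl : Tendsto (fun j => dist (G (s + b (k (m j))) (Fs s x))
          (G (s + b (k (m j))) (F t x))) atTop (𝓝 (dist (W x s) (Gs s (F t x)))) :=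
        hA.dist hB2
      have h1 : dist (W x s) (Gs s (F t x)) ≤ L * dist (Fs s x) (F t x) :=
        le_of_tendsto hdl (Eventually.of_forall fun j => hLd _ _ _)
      calc dist (W x s) (G t (F t x))
          ≤ dist (W x s) (Gs s (F t x)) + dist (Gs s (F t x)) (G t (F t x)) :=
            dist_triangle _ _ _
        _ ≤ L * dist (Fs s x) (F t x) + dist (Gs s (F t x)) (G t (F t x)) := by gcongr
    have h1 : Tendsto (fun l => dist (Fs (t - b (k (m l))) x) (F t x)) atTop (𝓝 0) :=
      tendsto_iff_dist_tendsto_zero.1 (hFs2' x hx t)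
    have h2 : Tendsto (fun l => dist (Gs (t - b (k (m l))) (F t x)) (G t (F t x)))
        atTop (𝓝 0) :=
      tendsto_iff_dist_tendsto_zero.1 (hGs2 (F t x) hFtS t)
    have hg : Tendsto (fun l => L * dist (Fs (t - b (k (m l))) x) (F t x)
        + dist (Gs (t - b (k (m l))) (F t x)) (G t (F t x))) atTop (𝓝 0) := by
      have := (h1.const_mul L).add h2
      simpa using this
    exact squeeze_zero (fun l => dist_nonneg) hbound hg
end
end

section
/- Let X be a Banach space, let R be a nonempty collection of sequences in ℝⁿ, let f : ℝⁿ → X be bounded, continuous and R-multi-almost automorphic, and let K : ℝⁿ → [0, ∞) be measurable with sup_{t ∈ ℝⁿ} ∫_{I_t} K(t − η) dη < ∞, where I_t := (−∞, t₁] × ⋯ × (−∞, t_n] for t = (t₁, …, t_n). Then F(t) := ∫_{I_t} K(t − η) f(η) dη defines an R-multi-almost automorphic function F : ℝⁿ → X. -/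
open Filter Topology MeasureTheory
open scoped ENNReal NNReal

noncomputable section

/-- `f : ℝⁿ → X` is `R`-multi-almost automorphic. -/
def MultiAA1 {n : ℕ} {X : Type*} [NormedAddCommGroup X]
    (R : Set (ℕ → EuclideanSpace ℝ (Fin n))) (f : EuclideanSpace ℝ (Fin n) → X) : Prop :=
  Continuous f ∧
  ∀ b ∈ R, ∃ k : ℕ → ℕ, StrictMono k ∧ ∃ fs : EuclideanSpace ℝ (Fin n) → X,
    (∀ t, Tendsto (fun l => f (t + b (k l))) atTop (𝓝 (fs t))) ∧
    (∀ t, Tendsto (fun l => fs (t - b (k l))) atTop (𝓝 (f t)))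

/-- `I_t = (−∞, t₁] × ⋯ × (−∞, t_n]`. -/
def It {n : ℕ} (t : EuclideanSpace ℝ (Fin n)) : Set (EuclideanSpace ℝ (Fin n)) :=
  {η | ∀ i, η i ≤ t i}

/-!
Translating the variable of integration gives `F (t + b) = ∫_{I_t} K(t − η) f(η + b) dη`, so every
limit in the definition of multi-almost automorphy passes through the integral by dominated
convergence, with the majorant `‖f‖_∞ · K(t − ·)`, integrable on `I_t` by the bound on
`sup_t ∫_{I_t} K(t − η) dη`. Continuity of `F` follows the same way from the continuity of `f`.
-/

theorem tendsto_integral_smul_of_tendsto_of_norm_le {α E : Type*} [MeasurableSpace α]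
    {μ : Measure α} [NormedAddCommGroup E] [NormedSpace ℝ E] {k : α → ℝ} (hk : Integrable k μ)
    {g : ℕ → α → E} {g₀ : α → E} {C : ℝ} (hgm : ∀ l, AEStronglyMeasurable (g l) μ)
    (hgC : ∀ l a, ‖g l a‖ ≤ C) (hg : ∀ a, Tendsto (fun l => g l a) atTop (𝓝 (g₀ a))) :
    Tendsto (fun l => ∫ a, k a • g l a ∂μ) atTop (𝓝 (∫ a, k a • g₀ a ∂μ)) := by
  refine tendsto_integral_filter_of_dominated_convergence (fun a => ‖k a‖ * C)
    (Eventually.of_forall fun l => hk.aestronglyMeasurable.smul (hgm l))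
    (Eventually.of_forall fun l => Eventually.of_forall fun a => ?_)
    (hk.norm.mul_const C) (Eventually.of_forall fun a => (hg a).const_smul (k a))
  rw [norm_smul]
  exact mul_le_mul_of_nonneg_left (hgC l a) (norm_nonneg _)

section

variable {n : ℕ} {X : Type*} [NormedAddCommGroup X] [NormedSpace ℝ X]

theorem preimage_add_right_It (t b : EuclideanSpace ℝ (Fin n)) :
    (· + b) ⁻¹' It (t + b) = It t := by
  ext η
  exact ⟨fun h i => le_of_add_le_add_right (h i), fun h i => add_le_add_left (h i) _⟩

theorem setIntegral_It_add (K : EuclideanSpace ℝ (Fin n) → ℝ) (g : EuclideanSpace ℝ (Fin n) → X)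
    (t b : EuclideanSpace ℝ (Fin n)) :
    ∫ η in It (t + b), K (t + b - η) • g η = ∫ η in It t, K (t - η) • g (η + b) := by
  rw [← (measurePreserving_add_right volume b).setIntegral_preimage_emb
    (MeasurableEquiv.addRight b).measurableEmbedding, preimage_add_right_It]
  simp only [add_sub_add_right_eq_sub]

theorem integrableOn_It_of_iSup_lintegral_lt_top {K : EuclideanSpace ℝ (Fin n) → ℝ}
    (hKmeas : Measurable K) (hKpos : ∀ s, 0 ≤ K s)
    (hK : (⨆ t : EuclideanSpace ℝ (Fin n),
      ∫⁻ η in It t, ENNReal.ofReal (K (t - η))) < ⊤) (t : EuclideanSpace ℝ (Fin n)) :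
    IntegrableOn (fun η => K (t - η)) (It t) := by
  refine ⟨(hKmeas.comp (measurable_const.sub measurable_id)).aestronglyMeasurable, ?_⟩
  rw [hasFiniteIntegral_iff_ofReal (Eventually.of_forall fun η => hKpos _)]
  exact lt_of_le_of_lt (le_iSup (fun s => ∫⁻ η in It s, ENNReal.ofReal (K (s - η))) t) hK

theorem tendsto_setIntegral_It_of_tendsto_translate {K : EuclideanSpace ℝ (Fin n) → ℝ}
    {t : EuclideanSpace ℝ (Fin n)} (hK : IntegrableOn (fun η => K (t - η)) (It t))
    {g g₀ : EuclideanSpace ℝ (Fin n) → X} (hgm : AEStronglyMeasurable g) {C : ℝ} (hgC : ∀ η, ‖g η‖ ≤ C)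
    {c : ℕ → EuclideanSpace ℝ (Fin n)}
    (hg : ∀ η, Tendsto (fun l => g (η + c l)) atTop (𝓝 (g₀ η))) :
    Tendsto (fun l => ∫ η in It (t + c l), K (t + c l - η) • g η) atTop
      (𝓝 (∫ η in It t, K (t - η) • g₀ η)) := by
  simp only [setIntegral_It_add]
  exact tendsto_integral_smul_of_tendsto_of_norm_le hK
    (fun l => (hgm.comp_measurePreserving (measurePreserving_add_right volume (c l))).restrict)
    (fun l η => hgC _) hg

end

theorem multiAA1_volterra_convolution_general {n : ℕ} {X : Type*}
    [NormedAddCommGroup X] [NormedSpace ℝ X]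
    (R : Set (ℕ → EuclideanSpace ℝ (Fin n)))
    (f : EuclideanSpace ℝ (Fin n) → X)
    (hfbdd : ∃ C : ℝ, ∀ t, ‖f t‖ ≤ C)
    (hfaa : MultiAA1 R f)
    (K : EuclideanSpace ℝ (Fin n) → ℝ)
    (hKmeas : Measurable K) (hKpos : ∀ s, 0 ≤ K s)
    (hE1 : (⨆ t : EuclideanSpace ℝ (Fin n),
      ∫⁻ η in It t, ENNReal.ofReal (K (t - η))) < ⊤) :
    MultiAA1 R (fun t => ∫ η in It t, K (t - η) • f η) := by
  obtain ⟨C, hC⟩ := hfbdd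
  obtain ⟨hfc, hfR⟩ := hfaa
  have hK := integrableOn_It_of_iSup_lintegral_lt_top hKmeas hKpos hE1
  refine ⟨continuous_iff_seqContinuous.mpr fun u t hu => ?_, fun b hb => ?_⟩
  · have hu' : ∀ η, Tendsto (fun l => f (η + (u l - t))) atTop (𝓝 (f η)) := fun η =>
      hfc.continuousAt.tendsto.comp (by simpa using tendsto_const_nhds.add (hu.sub_const t))
    simpa only [add_sub_cancel, Function.comp_def] using
      tendsto_setIntegral_It_of_tendsto_translate (hK t) hfc.aestronglyMeasurable hC hu'
  obtain ⟨k, hk, fs, hffs, hfsf⟩ := hfR b hb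
  have hfsm : StronglyMeasurable fs := stronglyMeasurable_of_tendsto atTop
    (fun l => (hfc.comp (continuous_add_const _)).stronglyMeasurable) (tendsto_pi_nhds.mpr hffs)
  have hfsC : ∀ η, ‖fs η‖ ≤ C := fun η =>
    le_of_tendsto (hffs η).norm (Eventually.of_forall fun l => hC _)
  refine ⟨k, hk, fun t => ∫ η in It t, K (t - η) • fs η, fun t => ?_, fun t => ?_⟩
  · exact tendsto_setIntegral_It_of_tendsto_translate (hK t) hfc.aestronglyMeasurable hC hffs
  · simpa only [← sub_eq_add_neg] using
      tendsto_setIntegral_It_of_tendsto_translate (c := fun l => -b (k l)) (hK t) hfsm.aestronglyMeasurable hfsC (by simpa only [← sub_eq_add_neg] using hfsf)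

/-- the Volterra-type convolution `F(t) = ∫_{I_t} K(t − η) f(η) dη` of a
bounded continuous `R`-multi-almost automorphic function `f` with a nonnegative measurable
kernel satisfying (E1) is `R`-multi-almost automorphic. -/
theorem multiAA1_volterra_convolution {n : ℕ} {X : Type*}
    [NormedAddCommGroup X] [NormedSpace ℝ X] [CompleteSpace X]
    (R : Set (ℕ → EuclideanSpace ℝ (Fin n))) (hR : R.Nonempty)
    (f : EuclideanSpace ℝ (Fin n) → X)
    (hfbdd : ∃ C : ℝ, ∀ t, ‖f t‖ ≤ C)
    (hfaa : MultiAA1 R f)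
    (K : EuclideanSpace ℝ (Fin n) → ℝ)
    (hKmeas : Measurable K) (hKpos : ∀ s, 0 ≤ K s)
    (hE1 : (⨆ t : EuclideanSpace ℝ (Fin n),
      ∫⁻ η in It t, ENNReal.ofReal (K (t - η))) < ⊤) :
    MultiAA1 R (fun t => ∫ η in It t, K (t - η) • f η) :=
  multiAA1_volterra_convolution_general R f hfbdd hfaa K hKmeas hKpos hE1
end
end

section
/- Let D ⊆ ℝⁿ be unbounded with D_t := I_t ∩ D, and suppose the interior of D_{t₀} is nonempty for some t₀ ∈ ℝⁿ. Let K : ℝⁿ → [0, ∞) be measurable satisfying: (E1) sup_{t ∈ ℝⁿ} ∫_{I_t} K(t − η) dη < ∞; (E2) ∫_{I_t ∩ Dᶜ} K(t − η) dη → 0 as |t| → ∞ with t ∈ D; (E3) for every r > 0, ∫_{I_t ∩ D ∩ B(0,r)} K(t − η) dη → 0 as |t| → ∞ with t ∈ D. Let f = f_a + f₀, where f_a : ℝⁿ → X is bounded, continuous and R-multi-almost automorphic and f₀ ∈ C_{0,D}(ℝⁿ : X). Then Γf(t) := ∫_{D_t} K(t − η) f(η) dη defines a D-asymptotically R-multi-almost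 automorphic function from ℝⁿ to X. -/
/-!
Let `k := K · 1_{[0,∞)ⁿ}`, integrable by (E1). As `D` need not be measurable, replace it by a
measurable `E ⊇ D` with the same restricted Lebesgue measure on which `f₀` still vanishes at
infinity; then `Γf = k ⋆ 1_E f`, and `1_E f = f_a + (1_E f₀ - 1_{Eᶜ} f_a)` gives
`Γf = k ⋆ f_a + k ⋆ (1_E f₀ - 1_{Eᶜ} f_a)`. Convolution with an `L¹` kernel maps bounded
measurable functions to continuous ones (translation is continuous in `L¹`) and preserves
multi-almost automorphy (dominated convergence). For `t ∈ D` far out the second term is small: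
split `I_t` into `I_t \ E`, where the mass of `k(t - ·)` is small by (E2); `I_t ∩ E ∩ B(0,ρ)`,
where it is small by (E3); and `I_t ∩ E \ B(0,ρ)`, where `f₀` is small.
-/

open Filter Topology MeasureTheory
open scoped ENNReal NNReal

noncomputable section

/-- `f₀ ∈ C_{0,D}(ℝⁿ : X)`: continuous and `f₀(t) → 0` as `|t| → ∞` with `t ∈ D`. -/
def C0D1 {n : ℕ} {X : Type*} [NormedAddCommGroup X]
    (D : Set (EuclideanSpace ℝ (Fin n))) (f₀ : EuclideanSpace ℝ (Fin n) → X) : Prop :=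
  Continuous f₀ ∧ ∀ ε > 0, ∃ r : ℝ, ∀ t ∈ D, r ≤ ‖t‖ → ‖f₀ t‖ < ε

/-- `f` is `D`-asymptotically `R`-multi-almost automorphic. -/
def DAsympMultiAA1 {n : ℕ} {X : Type*} [NormedAddCommGroup X]
    (D : Set (EuclideanSpace ℝ (Fin n))) (R : Set (ℕ → EuclideanSpace ℝ (Fin n)))
    (f : EuclideanSpace ℝ (Fin n) → X) : Prop :=
  ∃ fa f₀ : EuclideanSpace ℝ (Fin n) → X,
    MultiAA1 R fa ∧ C0D1 D f₀ ∧ ∀ t, f t = fa t + f₀ t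

open scoped Convolution
open ContinuousLinearMap (lsmul)

theorem MeasureTheory.Measure.restrict_eq_of_subset_toMeasurable {α : Type*}
    [MeasurableSpace α] {μ : Measure α} [SFinite μ] {D E : Set α} (hDE : D ⊆ E)
    (hE : E ⊆ toMeasurable μ D) : μ.restrict E = μ.restrict D :=
  le_antisymm ((Measure.restrict_mono hE le_rfl).trans_eq (restrict_toMeasurable_of_sFinite D))
    (Measure.restrict_mono hDE le_rfl)

theorem norm_indicator_sub_indicator_compl_le {α X : Type*} [NormedAddCommGroup X] {s : Set α}
    {f g : α → X} {M C : ℝ}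
    (hf : ∀ x ∈ s, ‖f x‖ ≤ M) (hg : ∀ x, ‖g x‖ ≤ C) (x : α) :
    ‖(s.indicator f - sᶜ.indicator g) x‖ ≤ max M C := by
  by_cases hx : x ∈ s
  · simpa [hx] using (hf x hx).trans (le_max_left M C)
  · simpa [hx] using (hg x).trans (le_max_right M C)

section WeightedIntegral

variable {α X : Type*} [MeasurableSpace α] {μ : Measure α} [NormedAddCommGroup X]
  {s : Set α} {w : α → ℝ} {φ : α → X}

theorem enorm_setIntegral_smul_le [NormedSpace ℝ X] (hw : ∀ x, 0 ≤ w x) :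
    ‖∫ x in s, w x • φ x ∂μ‖ₑ ≤ ∫⁻ x in s, ENNReal.ofReal (w x) * ‖φ x‖ₑ ∂μ :=
  (enorm_integral_le_lintegral_enorm _).trans_eq <| by
    simp_rw [enorm_smul, Real.enorm_of_nonneg (hw _)]

theorem setLIntegral_ofReal_mul_enorm_le (hw : Measurable w) {c : ℝ}
    (hφ : ∀ x ∈ s, ‖φ x‖ ≤ c) :
    ∫⁻ x in s, ENNReal.ofReal (w x) * ‖φ x‖ₑ ∂μ ≤
      (∫⁻ x in s, ENNReal.ofReal (w x) ∂μ) * ENNReal.ofReal c := by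
  rw [← lintegral_mul_const _ hw.ennreal_ofReal]
  refine setLIntegral_mono (hw.ennreal_ofReal.mul_const _) fun x hx => ?_
  rw [← ofReal_norm]
  gcongr
  exact hφ x hx

end WeightedIntegral

section Convolution

variable {G X : Type*} [NormedAddCommGroup G] [SecondCountableTopology G] [MeasurableSpace G]
  [BorelSpace G] [NormedAddCommGroup X] [NormedSpace ℝ X]
  {μ : Measure G} [SFinite μ] [μ.IsAddLeftInvariant] {k : G → ℝ} {φ : G → X} {M : ℝ}

theorem MeasureTheory.Integrable.convolutionExists_lsmul_of_norm_le (hk : Integrable k μ)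
    (hφ : AEStronglyMeasurable φ μ) (hM : ∀ x, ‖φ x‖ ≤ M) :
    ConvolutionExists k φ (lsmul ℝ ℝ) μ := fun x =>
  hk.smul_of_top_left (memLp_top_of_bound (hφ.comp_quasiMeasurePreserving
    (quasiMeasurePreserving_sub_left μ x)) M (.of_forall fun t => hM (x - t)))

theorem tendsto_convolution_lsmul_of_tendsto {ι : Type*} {l : Filter ι} [l.IsCountablyGenerated]
    {φ : ι → G → X} {ψ : G → X} (hk : Integrable k μ) (hφ : ∀ i, AEStronglyMeasurable (φ i) μ)
    (hM : ∀ i x, ‖φ i x‖ ≤ M) (hlim : ∀ x, Tendsto (fun i => φ i x) l (𝓝 (ψ x))) (x : G) :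
    Tendsto (fun i => (k ⋆[lsmul ℝ ℝ, μ] φ i) x) l (𝓝 ((k ⋆[lsmul ℝ ℝ, μ] ψ) x)) :=
  tendsto_integral_filter_of_dominated_convergence (fun t => ‖k t‖ * M)
    (.of_forall fun i => hk.aestronglyMeasurable.convolution_integrand_snd _ (hφ i) x)
    (.of_forall fun i => .of_forall fun t => by
      simpa only [ContinuousLinearMap.lsmul_apply, norm_smul] using
        mul_le_mul_of_nonneg_left (hM i (x - t)) (norm_nonneg (k t)))
    (hk.norm.mul_const M) (.of_forall fun t => (hlim (x - t)).const_smul (k t))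

variable [μ.IsNegInvariant]

theorem MeasureTheory.Integrable.continuous_convolution_lsmul_of_norm_le
    [IsLocallyFiniteMeasure μ] [μ.InnerRegularCompactLTTop] (hk : Integrable k μ)
    (hφ : AEStronglyMeasurable φ μ) (hM : ∀ x, ‖φ x‖ ≤ M) :
    Continuous (k ⋆[lsmul ℝ ℝ, μ] φ) := by
  let τ : G → C(G, G) := ContinuousMap.curry ⟨fun p : G × G => p.1 - p.2, by fun_prop⟩
  have hτ (t : G) : MeasurePreserving (τ t) μ μ := Measure.measurePreserving_sub_left μ t
  let T : G → Lp ℝ 1 μ := fun t => Lp.compMeasurePreserving (τ t) (hτ t) (hk.toL1 k)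
  have hT : Continuous T :=
    continuous_const.compMeasurePreservingLp (ContinuousMap.curry _).continuous hτ
      ENNReal.one_ne_top
  have hTk (t : G) : T t =ᵐ[μ] fun η => k (t - η) :=
    (Lp.coeFn_compMeasurePreserving _ _).trans
      ((hτ t).quasiMeasurePreserving.ae_eq_comp hk.coeFn_toL1)
  have hconv := hk.convolutionExists_lsmul_of_norm_le hφ hM
  have key (s t : G) :
      ‖(k ⋆[lsmul ℝ ℝ, μ] φ) s - (k ⋆[lsmul ℝ ℝ, μ] φ) t‖ ≤ M * ‖T s - T t‖ := by
    have hdiff : Integrable (fun η => k (s - η) - k (t - η)) μ :=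
      (hk.comp_sub_left s).sub (hk.comp_sub_left t)
    calc ‖(k ⋆[lsmul ℝ ℝ, μ] φ) s - (k ⋆[lsmul ℝ ℝ, μ] φ) t‖
        = ‖∫ η, (k (s - η) - k (t - η)) • φ η ∂μ‖ := by
          simp_rw [convolution_lsmul_swap, sub_smul]
          exact congrArg _ (integral_sub (hconv s).integrable_swap (hconv t).integrable_swap).symm
      _ ≤ ∫ η, M * ‖k (s - η) - k (t - η)‖ ∂μ :=
          norm_integral_le_of_norm_le (hdiff.norm.const_mul M) <| .of_forall fun η => by
            rw [norm_smul, mul_comm]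
            exact mul_le_mul_of_nonneg_right (hM η) (norm_nonneg _)
      _ = M * ‖T s - T t‖ := by
          rw [integral_const_mul, L1.norm_eq_integral_norm]
          refine congrArg _ (integral_congr_ae ?_)
          filter_upwards [Lp.coeFn_sub (T s) (T t), hTk s, hTk t] with η h h₁ h₂
          rw [h, Pi.sub_apply, h₁, h₂]
  refine continuous_iff_continuousAt.2 fun t => tendsto_iff_norm_sub_tendsto_zero.2 <|
    squeeze_zero (fun _ => norm_nonneg _) (fun s => key s t) ?_
  simpa using ((hT.tendsto t).sub_const (T t)).norm.const_mul M

end Convolution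

section Volterra

variable {n : ℕ} {X : Type*} [NormedAddCommGroup X]

local notation "ℝⁿ" => EuclideanSpace ℝ (Fin n)

theorem C0D1.exists_measurableSet_superset {D : Set ℝⁿ} {f : ℝⁿ → X} (hf : C0D1 D f) :
    ∃ E, MeasurableSet E ∧ D ⊆ E ∧ C0D1 E f := by
  choose r hr using fun m : ℕ => hf.2 (1 / (m + 1)) Nat.one_div_pos_of_nat
  refine ⟨⋂ m, {x | r m ≤ ‖x‖ → ‖f x‖ < 1 / (m + 1)}, ?_, fun x hx => Set.mem_iInter.2
    fun m => hr m x hx, hf.1, fun ε hε => ?_⟩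
  · exact .iInter fun m => measurableSet_setOfPred.2 <|
      (measurableSet_le measurable_const measurable_norm).mem.imp
        (measurableSet_lt hf.1.norm.measurable measurable_const).mem
  · obtain ⟨m, hm⟩ := exists_nat_one_div_lt hε
    exact ⟨r m, fun x hx hrx => (Set.mem_iInter.1 hx m hrx).trans hm⟩

theorem C0D1.mono {D E : Set ℝⁿ} {f : ℝⁿ → X} (hf : C0D1 E f) (hDE : D ⊆ E) : C0D1 D f :=
  ⟨hf.1, fun ε hε => (hf.2 ε hε).imp fun _ hr x hx => hr x (hDE hx)⟩

theorem C0D1.exists_norm_le {E : Set ℝⁿ} {f : ℝⁿ → X} (hf : C0D1 E f) :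
    ∃ M, 0 ≤ M ∧ ∀ x ∈ E, ‖f x‖ ≤ M := by
  obtain ⟨r, hr⟩ := hf.2 1 one_pos
  obtain ⟨M, hM⟩ :=
    (isCompact_closedBall (0 : ℝⁿ) r).exists_bound_of_continuousOn hf.1.continuousOn
  refine ⟨max M 1, by positivity, fun x hx => ?_⟩
  rcases le_or_gt r ‖x‖ with h | h
  · exact (hr x hx h).le.trans (le_max_right _ _)
  · exact (hM x (mem_closedBall_zero_iff.2 h.le)).trans (le_max_left _ _)

theorem C0D1.exists_measurableSet_restrict_eq {D : Set ℝⁿ} {f : ℝⁿ → X} (hf : C0D1 D f) :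
    ∃ E, MeasurableSet E ∧ D ⊆ E ∧ volume.restrict E = volume.restrict D ∧ C0D1 E f := by
  obtain ⟨E, hE, hDE, hfE⟩ := hf.exists_measurableSet_superset
  have hDE' : D ⊆ E ∩ toMeasurable volume D := Set.subset_inter hDE (subset_toMeasurable _ _)
  exact ⟨_, hE.inter (measurableSet_toMeasurable _ _), hDE',
    Measure.restrict_eq_of_subset_toMeasurable hDE' Set.inter_subset_right,
    hfE.mono Set.inter_subset_left⟩

variable [NormedSpace ℝ X]

theorem MultiAA1.convolution {R : Set (ℕ → ℝⁿ)} {fa : ℝⁿ → X} {k : ℝⁿ → ℝ} {C : ℝ}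
    (hfa : MultiAA1 R fa) (hC : ∀ x, ‖fa x‖ ≤ C) (hk : Integrable k) :
    MultiAA1 R (k ⋆[lsmul ℝ ℝ, volume] fa) := by
  refine ⟨hk.continuous_convolution_lsmul_of_norm_le hfa.1.aestronglyMeasurable hC,
    fun b hb => ?_⟩
  obtain ⟨l, hl, fs, hfs, hfs_back⟩ := hfa.2 b hb
  have hfs_meas : StronglyMeasurable fs :=
    stronglyMeasurable_of_tendsto atTop
      (fun i => (hfa.1.comp (continuous_add_const (b (l i)))).stronglyMeasurable)
      (tendsto_pi_nhds.2 hfs)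
  have hfs_bdd (x : ℝⁿ) : ‖fs x‖ ≤ C := le_of_tendsto (hfs x).norm (.of_forall fun _ => hC _)
  refine ⟨l, hl, k ⋆[lsmul ℝ ℝ, volume] fs, fun t => ?_, fun t => ?_⟩
  · simpa only [convolution_def, Function.comp_apply, add_sub_right_comm] using
      tendsto_convolution_lsmul_of_tendsto hk
        (fun i => (hfa.1.comp (continuous_add_const (b (l i)))).aestronglyMeasurable)
        (fun i x => hC _) hfs t
  · simpa only [convolution_def, Function.comp_apply, sub_right_comm] using
      tendsto_convolution_lsmul_of_tendsto hk
        (fun i => (hfs_meas.comp_measurable (measurable_sub_const (b (l i)))).aestronglyMeasurable)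
        (fun i x => hfs_bdd _) hfs_back t

def nonnegOrthant (n : ℕ) : Set (EuclideanSpace ℝ (Fin n)) := {s | ∀ i, 0 ≤ s i}

theorem measurableSet_nonnegOrthant : MeasurableSet (nonnegOrthant n) := by
  simp only [nonnegOrthant, Set.ofPred_forall]
  exact .iInter fun i => measurableSet_le measurable_const (PiLp.continuous_apply 2 _ i).measurable

theorem measurableSet_It (t : ℝⁿ) : MeasurableSet (It t) := by
  simp only [It, Set.ofPred_forall]
  exact .iInter fun i => measurableSet_le (PiLp.continuous_apply 2 _ i).measurable measurable_const

theorem indicator_nonnegOrthant_sub (K : ℝⁿ → ℝ) (t η : ℝⁿ) :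
    (nonnegOrthant n).indicator K (t - η) = (It t).indicator (fun η => K (t - η)) η := by
  simp only [Set.indicator_apply, nonnegOrthant, It, Set.mem_ofPred_eq, PiLp.sub_apply, sub_nonneg]

theorem convolution_indicator_nonnegOrthant (K : ℝⁿ → ℝ) (φ : ℝⁿ → X) (t : ℝⁿ) :
    ((nonnegOrthant n).indicator K ⋆[lsmul ℝ ℝ, volume] φ) t = ∫ η in It t, K (t - η) • φ η := by
  rw [convolution_lsmul_swap, ← integral_indicator (measurableSet_It t)]
  simp only [indicator_nonnegOrthant_sub, Set.indicator_smul_apply_left]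

theorem integrable_indicator_nonnegOrthant {K : ℝⁿ → ℝ} (hK : Measurable K) (hK0 : ∀ s, 0 ≤ K s)
    (hfin : ∫⁻ η in It 0, ENNReal.ofReal (K (0 - η)) < ⊤) :
    Integrable ((nonnegOrthant n).indicator K) := by
  refine ⟨(hK.indicator measurableSet_nonnegOrthant).aestronglyMeasurable, ?_⟩
  rw [hasFiniteIntegral_iff_ofReal (.of_forall (Set.indicator_nonneg fun s _ => hK0 s)),
    ← lintegral_sub_left_eq_self _ 0]
  convert hfin using 1
  rw [← lintegral_indicator (measurableSet_It 0)]
  congr 1 with η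
  rw [indicator_nonnegOrthant_sub]
  by_cases h : η ∈ It 0 <;> simp [h]

theorem c0D1_convolution_indicator_sub {T E : Set ℝⁿ} {K : ℝⁿ → ℝ} {f₀ fa : ℝⁿ → X} {C : ℝ}
    (hK : Measurable K) (hK0 : ∀ s, 0 ≤ K s)
    (hE1 : (⨆ t : ℝⁿ, ∫⁻ η in It t, ENNReal.ofReal (K (t - η))) < ⊤)
    (hE : MeasurableSet E)
    (hE2 : ∀ ε > 0, ∃ r : ℝ, ∀ t ∈ T, r ≤ ‖t‖ →
      (∫⁻ η in It t ∩ Eᶜ, ENNReal.ofReal (K (t - η))) < ENNReal.ofReal ε)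
    (hE3 : ∀ ρ > 0, ∀ ε > 0, ∃ r : ℝ, ∀ t ∈ T, r ≤ ‖t‖ →
      (∫⁻ η in It t ∩ E ∩ Metric.ball 0 ρ, ENNReal.ofReal (K (t - η))) < ENNReal.ofReal ε)
    (hf₀ : C0D1 E f₀) (hfa : Continuous fa) (hC : ∀ x, ‖fa x‖ ≤ C) :
    C0D1 T ((nonnegOrthant n).indicator K ⋆[lsmul ℝ ℝ, volume]
      (E.indicator f₀ - Eᶜ.indicator fa)) := by
  set g := E.indicator f₀ - Eᶜ.indicator fa
  set S := (⨆ t : ℝⁿ, ∫⁻ η in It t, ENNReal.ofReal (K (t - η))).toReal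
  have hS (t : ℝⁿ) : ∫⁻ η in It t, ENNReal.ofReal (K (t - η)) ≤ ENNReal.ofReal S := by
    rw [ENNReal.ofReal_toReal hE1.ne]
    exact le_iSup (fun t : ℝⁿ => ∫⁻ η in It t, ENNReal.ofReal (K (t - η))) t
  obtain ⟨M, hM0, hM⟩ := hf₀.exists_norm_le
  have hC0 : 0 ≤ C := (norm_nonneg _).trans (hC 0)
  have hg_mem {x : ℝⁿ} (hx : x ∈ E) : g x = f₀ x := by simp [g, hx]
  have hg_compl {x : ℝⁿ} (hx : x ∉ E) : ‖g x‖ ≤ C := by simpa [g, hx] using hC x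
  have hk := integrable_indicator_nonnegOrthant hK hK0 ((le_iSup _ 0).trans_lt hE1)
  refine ⟨hk.continuous_convolution_lsmul_of_norm_le ((hf₀.1.aestronglyMeasurable.indicator hE).sub
    (hfa.aestronglyMeasurable.indicator hE.compl)) (norm_indicator_sub_indicator_compl_le hM hC),
    fun ε hε => ?_⟩
  have hS0 : 0 ≤ S := ENNReal.toReal_nonneg
  set δ := ε / (C + M + S + 1)
  have hδ : 0 < δ := by positivity
  have hδε : (C + M + S) * δ < ε := by
    have : (C + M + S + 1) * δ = ε := mul_div_cancel₀ _ (by positivity)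
    nlinarith
  obtain ⟨ρ, hρ⟩ := hf₀.2 δ hδ
  obtain ⟨r₂, hr₂⟩ := hE2 δ hδ
  obtain ⟨r₃, hr₃⟩ := hE3 (max ρ 1) (by positivity) δ hδ
  refine ⟨max r₂ r₃, fun t ht htr => ?_⟩
  have hw : Measurable fun η => K (t - η) := hK.comp (measurable_const.sub measurable_id)
  set F := fun η => ENNReal.ofReal (K (t - η)) * ‖g η‖ₑ
  set B := Metric.ball (0 : ℝⁿ) (max ρ 1)
  rw [convolution_indicator_nonnegOrthant, ← ENNReal.ofReal_lt_ofReal_iff hε, ofReal_norm]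
  calc ‖∫ η in It t, K (t - η) • g η‖ₑ
      ≤ ∫⁻ η in It t, F η := enorm_setIntegral_smul_le fun η => hK0 _
    _ = (∫⁻ η in It t ∩ Eᶜ, F η) +
          ((∫⁻ η in It t ∩ E ∩ B, F η) + ∫⁻ η in (It t ∩ E) \ B, F η) := by
      rw [lintegral_inter_add_sdiff _ _ Metric.isOpen_ball.measurableSet, ← Set.sdiff_eq,
        add_comm (∫⁻ η in It t \ E, F η), lintegral_inter_add_sdiff _ _ hE]
    _ ≤ ENNReal.ofReal δ * ENNReal.ofReal C +
        (ENNReal.ofReal δ * ENNReal.ofReal M + ENNReal.ofReal S * ENNReal.ofReal δ) := by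
      gcongr ?_ + (?_ + ?_)
      · refine (setLIntegral_ofReal_mul_enorm_le hw fun x hx => hg_compl hx.2).trans ?_
        gcongr
        exact (hr₂ t ht (le_of_max_le_left htr)).le
      · refine (setLIntegral_ofReal_mul_enorm_le (c := M) hw fun x hx => ?_).trans ?_
        · rw [hg_mem hx.1.2]; exact hM x hx.1.2
        gcongr
        exact (hr₃ t ht (le_of_max_le_right htr)).le
      · refine (setLIntegral_ofReal_mul_enorm_le (c := δ) hw fun x hx => ?_).trans ?_
        · rw [hg_mem hx.1.2]
          refine (hρ x hx.1.2 ?_).le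
          have : max ρ 1 ≤ ‖x‖ := by simpa [B] using hx.2
          exact (le_max_left _ _).trans this
        gcongr
        exact (lintegral_mono_set (Set.sdiff_subset.trans Set.inter_subset_left)).trans (hS t)
    _ = ENNReal.ofReal ((C + M + S) * δ) := by
      rw [ENNReal.ofReal_mul (by positivity), ENNReal.ofReal_add (by positivity) hS0,
        ENNReal.ofReal_add hC0 hM0]
      ring
    _ < ENNReal.ofReal ε := (ENNReal.ofReal_lt_ofReal_iff hε).2 hδε

theorem setIntegral_It_inter_eq_convolution_add {D E : Set ℝⁿ} {K : ℝⁿ → ℝ}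
    {f fa f₀ : ℝⁿ → X} {C : ℝ} (hk : Integrable ((nonnegOrthant n).indicator K))
    (hE : MeasurableSet E) (hED : volume.restrict E = volume.restrict D) (hf₀ : C0D1 E f₀)
    (hfa : Continuous fa) (hC : ∀ x, ‖fa x‖ ≤ C) (hdec : ∀ x, f x = fa x + f₀ x) (t : ℝⁿ) :
    ∫ η in It t ∩ D, K (t - η) • f η =
      ((nonnegOrthant n).indicator K ⋆[lsmul ℝ ℝ, volume] fa) t +
        ((nonnegOrthant n).indicator K ⋆[lsmul ℝ ℝ, volume]
          (E.indicator f₀ - Eᶜ.indicator fa)) t := by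
  obtain ⟨M, -, hM⟩ := hf₀.exists_norm_le
  have hf : E.indicator f = fa + (E.indicator f₀ - Eᶜ.indicator fa) := by
    ext x
    by_cases hx : x ∈ E <;> simp [hx, hdec]
  have hconv_fa := hk.convolutionExists_lsmul_of_norm_le hfa.aestronglyMeasurable hC
  have hconv_g := hk.convolutionExists_lsmul_of_norm_le ((hf₀.1.aestronglyMeasurable.indicator
    hE).sub (hfa.aestronglyMeasurable.indicator hE.compl))
    (norm_indicator_sub_indicator_compl_le hM hC)
  rw [← Measure.restrict_restrict (measurableSet_It t), ← hED,
    Measure.restrict_restrict (measurableSet_It t), ← setIntegral_indicator hE,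
    ← (hconv_fa t).distrib_add (hconv_g t), ← hf, convolution_indicator_nonnegOrthant]
  simp only [Set.indicator_smul_apply]

end Volterra

theorem dAsympMultiAA1_volterra_general {n : ℕ} {X : Type*}
    [NormedAddCommGroup X] [NormedSpace ℝ X]
    (R : Set (ℕ → EuclideanSpace ℝ (Fin n)))
    (D : Set (EuclideanSpace ℝ (Fin n)))
    (K : EuclideanSpace ℝ (Fin n) → ℝ)
    (hKmeas : Measurable K) (hKpos : ∀ s, 0 ≤ K s)
    (hE1 : (⨆ t : EuclideanSpace ℝ (Fin n),
      ∫⁻ η in It t, ENNReal.ofReal (K (t - η))) < ⊤)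
    (hE2 : ∀ ε > 0, ∃ r : ℝ, ∀ t ∈ D, r ≤ ‖t‖ →
      (∫⁻ η in It t ∩ Dᶜ, ENNReal.ofReal (K (t - η))) < ENNReal.ofReal ε)
    (hE3 : ∀ ρ > 0, ∀ ε > 0, ∃ r : ℝ, ∀ t ∈ D, r ≤ ‖t‖ →
      (∫⁻ η in It t ∩ D ∩ Metric.ball (0 : EuclideanSpace ℝ (Fin n)) ρ,
        ENNReal.ofReal (K (t - η))) < ENNReal.ofReal ε)
    (f fa f₀ : EuclideanSpace ℝ (Fin n) → X)
    (hfa_bdd : ∃ C : ℝ, ∀ t, ‖fa t‖ ≤ C)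
    (hfa : MultiAA1 R fa) (hf₀ : C0D1 D f₀)
    (hdec : ∀ t, f t = fa t + f₀ t) :
    DAsympMultiAA1 D R (fun t => ∫ η in It t ∩ D, K (t - η) • f η) := by
  obtain ⟨C, hC⟩ := hfa_bdd
  obtain ⟨E, hE, hDE, hED, hf₀E⟩ := hf₀.exists_measurableSet_restrict_eq
  have hk := integrable_indicator_nonnegOrthant hKmeas hKpos ((le_iSup _ 0).trans_lt hE1)
  refine ⟨_, _, hfa.convolution hC hk,
    c0D1_convolution_indicator_sub hKmeas hKpos hE1 hE ?_ ?_ hf₀E hfa.1 hC,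
    setIntegral_It_inter_eq_convolution_add hk hE hED hf₀E hfa.1 hC hdec⟩
  · exact fun ε hε => (hE2 ε hε).imp fun r hr t ht htr => (lintegral_mono_set
      (Set.inter_subset_inter_right _ (Set.compl_subset_compl.2 hDE))).trans_lt (hr t ht htr)
  · refine fun ρ hρ ε hε => (hE3 ρ hρ ε hε).imp fun r hr t ht htr => ?_
    have hs := (measurableSet_It t).inter (Metric.isOpen_ball (x := 0) (ε := ρ)).measurableSet
    rw [Set.inter_right_comm, ← Measure.restrict_restrict hs, hED, Measure.restrict_restrict hs,
      Set.inter_right_comm]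
    exact hr t ht htr

/-- under (E1)–(E3), `Γf(t) = ∫_{D_t} K(t − η) f(η) dη` is `D`-asymptotically
`R`-multi-almost automorphic whenever `f = f_a + f₀` with `f_a` bounded continuous
`R`-multi-almost automorphic and `f₀ ∈ C_{0,D}(ℝⁿ : X)`. -/
theorem dAsympMultiAA1_volterra {n : ℕ} {X : Type*}
    [NormedAddCommGroup X] [NormedSpace ℝ X] [CompleteSpace X]
    (R : Set (ℕ → EuclideanSpace ℝ (Fin n))) (hR : R.Nonempty)
    (D : Set (EuclideanSpace ℝ (Fin n))) (hD : ¬ Bornology.IsBounded D)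
    (hint : ∃ t₀ : EuclideanSpace ℝ (Fin n), (interior (It t₀ ∩ D)).Nonempty)
    (K : EuclideanSpace ℝ (Fin n) → ℝ)
    (hKmeas : Measurable K) (hKpos : ∀ s, 0 ≤ K s)
    (hE1 : (⨆ t : EuclideanSpace ℝ (Fin n),
      ∫⁻ η in It t, ENNReal.ofReal (K (t - η))) < ⊤)
    (hE2 : ∀ ε > 0, ∃ r : ℝ, ∀ t ∈ D, r ≤ ‖t‖ →
      (∫⁻ η in It t ∩ Dᶜ, ENNReal.ofReal (K (t - η))) < ENNReal.ofReal ε)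
    (hE3 : ∀ ρ > 0, ∀ ε > 0, ∃ r : ℝ, ∀ t ∈ D, r ≤ ‖t‖ →
      (∫⁻ η in It t ∩ D ∩ Metric.ball (0 : EuclideanSpace ℝ (Fin n)) ρ,
        ENNReal.ofReal (K (t - η))) < ENNReal.ofReal ε)
    (f fa f₀ : EuclideanSpace ℝ (Fin n) → X)
    (hfa_bdd : ∃ C : ℝ, ∀ t, ‖fa t‖ ≤ C)
    (hfa : MultiAA1 R fa) (hf₀ : C0D1 D f₀)
    (hdec : ∀ t, f t = fa t + f₀ t) :
    DAsympMultiAA1 D R (fun t => ∫ η in It t ∩ D, K (t - η) • f η) :=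
  dAsympMultiAA1_volterra_general R D K hKmeas hKpos hE1 hE2 hE3 f fa f₀ hfa_bdd hfa hf₀ hdec
end
end
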